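/- (Jacobi's Theorem, 2×2 case.) Let n ≥ 2 and let A be an n×n matrix over a commutative ring R. Fix rows p < q and columns u < v (all between 1 and n), and let A'(r,c) denote the (r,c) cofactor of A. Then A'(p,u) · A'(q,v) − A'(p,v) · A'(q,u) = det(A) · det(B) · (−1)^{p+q+u+v}, where B is the (n−2)×(n−2) submatrix of A obtained by deleting rows p and q and columns u and v. -/

import Mathlib

/-- `skip a x` is the `x`-th natural number (in increasing order) different from `a`. -/
def skip (a x : ℕ) : ℕ := if x < a then x else x + 1

theorem skip_le (a x : ℕ) : skip a x ≤ x + 1 := by unfold skip; split <;> omega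

/-- The `(i, j)` minor of `A`: the determinant of the `(n-1) × (n-1)` submatrix
obtained from `A` by deleting row `i` and column `j` (no sign attached). -/
def dmMinor {R : Type*} [CommRing R] {n : ℕ} (A : Matrix (Fin n) (Fin n) R)
    (i j : Fin n) : R :=
  (Matrix.of fun r c : Fin (n - 1) =>
    A ⟨skip i.1 r.1, by have := skip_le i.1 r.1; omega⟩
      ⟨skip j.1 c.1, by have := skip_le j.1 c.1; omega⟩).det

/-- The `(i, j)` cofactor of `A`: `(−1)^{i+j}` times the `(i, j)` minor. -/
def cofactor {R : Type*} [CommRing R] {n : ℕ} (A : Matrix (Fin n) (Fin n) R)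
    (i j : Fin n) : R :=
  (-1 : R) ^ (i.1 + j.1) * dmMinor A i j

/-!
Let `X` be the identity matrix with columns `u, v` replaced by columns `p, q` of `adj A`.
Since `A * adj A = det A • 1`, the product `A * X` is `A` with columns `u, v` replaced by
`det A • e_p` and `det A • e_q`; two Laplace expansions give `det (A * X) = ± (det A)² det B`.
On the other side `det X` is the `2 × 2` minor of `adj A` in rows `u, v` and columns `p, q`,
which is the left-hand side. This proves the identity multiplied by `det A`. For the generic
matrix over `ℤ[X_ij]` the factor `det A` cancels, and specialising gives the general case.
-/

theorem Fin.val_succAbove_eq_skip {m : ℕ} (i : Fin (m + 1)) (r : Fin m) :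
    (i.succAbove r : ℕ) = skip i r := by
  unfold skip
  split_ifs with h
  · exact congrArg Fin.val (Fin.succAbove_of_castSucc_lt i r h)
  · exact congrArg Fin.val (Fin.succAbove_of_le_castSucc i r (not_lt.mp h))

theorem Matrix.submatrix_updateCol_of_injective {α l m n o : Type*} [DecidableEq m]
    [DecidableEq n] (A : Matrix l m α) {f : o → l} {g : n → m} (hg : g.Injective) (k : n)
    (c : l → α) :
    (A.updateCol (g k) c).submatrix f g = (A.submatrix f g).updateCol k (c ∘ f) := by
  ext r s
  simp [Matrix.updateCol_apply, hg.eq_iff]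

section CommRing

variable {R : Type*} [CommRing R]

theorem dmMinor_eq_det_submatrix {m : ℕ} (A : Matrix (Fin (m + 1)) (Fin (m + 1)) R)
    (i j : Fin (m + 1)) : dmMinor A i j = (A.submatrix i.succAbove j.succAbove).det := by
  unfold dmMinor
  congr 1
  ext r c
  simp only [Matrix.of_apply, Matrix.submatrix_apply]
  congr 1 <;> exact Fin.ext (Fin.val_succAbove_eq_skip _ _).symm

theorem cofactor_eq_adjugate {m : ℕ} (A : Matrix (Fin (m + 1)) (Fin (m + 1)) R)
    (i j : Fin (m + 1)) : cofactor A i j = A.adjugate j i := by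
  rw [cofactor, dmMinor_eq_det_submatrix, Matrix.adjugate_fin_succ_eq_det_submatrix]

namespace Matrix

theorem det_updateCol_single {m : ℕ} (A : Matrix (Fin (m + 1)) (Fin (m + 1)) R)
    (i j : Fin (m + 1)) (d : R) :
    (A.updateCol j (Pi.single i d)).det
      = (-1) ^ (i + j : ℕ) * d * (A.submatrix i.succAbove j.succAbove).det := by
  rw [det_succ_column _ j, Fintype.sum_eq_single i fun k hk => ?_]
  · simp
  · simp [hk]

theorem det_updateCol_updateCol_one {n : Type*} [Fintype n] [DecidableEq n] {u v : n}
    (huv : u ≠ v) (a b : n → R) :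
    (((1 : Matrix n n R).updateCol u a).updateCol v b).det = a u * b v - a v * b u := by
  -- a rank-two perturbation of `1`; Weinstein–Aronszajn reduces it to a `2 × 2` determinant
  let U : Matrix n (Fin 2) R := (of ![a - Pi.single u 1, b - Pi.single v 1])ᵀ
  let V : Matrix (Fin 2) n R := of ![Pi.single u 1, Pi.single v 1]
  have hUV : ((1 : Matrix n n R).updateCol u a).updateCol v b = 1 + U * V := by
    ext i c
    by_cases hcv : c = v <;> by_cases hcu : c = u <;>
      simp [U, V, mul_apply, Fin.sum_univ_two, one_apply, Pi.single_apply, hcu, hcv, huv,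
        huv.symm]
  have hVU : 1 + V * U = !![a u, b u; a v, b v] := by
    ext k l
    fin_cases k <;> fin_cases l <;> simp [U, V, huv, huv.symm]
  rw [hUV, det_one_add_mul_comm, hVU, det_fin_two_of, mul_comm (b u)]

theorem mulVec_adjugate_col {n : Type*} [Fintype n] [DecidableEq n] (A : Matrix n n R) (i : n) :
    (A *ᵥ fun k => A.adjugate k i) = Pi.single i A.det := by
  ext k
  simp [mulVec, dotProduct, ← mul_apply, mul_adjugate, one_apply, Pi.single_apply]

theorem det_mul_adjugate_mul_sub_adjugate_mul {m : ℕ} (A : Matrix (Fin (m + 2)) (Fin (m + 2)) R)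
    (i j : Fin (m + 2)) (i' j' : Fin (m + 1)) :
    A.det * (A.adjugate (j.succAbove j') (i.succAbove i') * A.adjugate j i
        - A.adjugate j (i.succAbove i') * A.adjugate (j.succAbove j') i)
      = A.det * (A.det * (-1) ^ (i + j + i' + j' : ℕ)
          * ((A.submatrix i.succAbove j.succAbove).submatrix i'.succAbove j'.succAbove).det) := by
  let X : Matrix (Fin (m + 2)) (Fin (m + 2)) R :=
    ((1 : Matrix _ _ R).updateCol (j.succAbove j') fun k => A.adjugate k (i.succAbove i')).updateCol
      j fun k => A.adjugate k i
  have hX : X.det = A.adjugate (j.succAbove j') (i.succAbove i') * A.adjugate j i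
      - A.adjugate j (i.succAbove i') * A.adjugate (j.succAbove j') i :=
    det_updateCol_updateCol_one (Fin.succAbove_ne j j') _ _
  have hAX : A * X = (A.updateCol (j.succAbove j') (Pi.single (i.succAbove i') A.det)).updateCol j
      (Pi.single i A.det) := by
    rw [mul_updateCol, mul_updateCol, mul_one, mulVec_adjugate_col, mulVec_adjugate_col]
  have hsingle : Pi.single (i.succAbove i') A.det ∘ i.succAbove = Pi.single i' A.det :=
    Function.update_comp_eq_of_injective (0 : Fin (m + 2) → R) Fin.succAbove_right_injective i'
      A.det
  rw [← hX, ← det_mul, hAX, det_updateCol_single,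
    submatrix_updateCol_of_injective _ Fin.succAbove_right_injective, hsingle,
    det_updateCol_single]
  ring

theorem adjugate_mul_sub_adjugate_mul {m : ℕ} (A : Matrix (Fin (m + 2)) (Fin (m + 2)) R)
    (i j : Fin (m + 2)) (i' j' : Fin (m + 1)) :
    A.adjugate (j.succAbove j') (i.succAbove i') * A.adjugate j i
        - A.adjugate j (i.succAbove i') * A.adjugate (j.succAbove j') i
      = A.det * (-1) ^ (i + j + i' + j' : ℕ)
          * ((A.submatrix i.succAbove j.succAbove).submatrix i'.succAbove j'.succAbove).det := by
  let G := mvPolynomialX (Fin (m + 2)) (Fin (m + 2)) ℤ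
  let φ := MvPolynomial.eval₂Hom (Int.castRingHom R) fun k : Fin (m + 2) × Fin (m + 2) => A k.1 k.2
  have hG := mul_left_cancel₀ (det_mvPolynomialX_ne_zero _ ℤ)
    (det_mul_adjugate_mul_sub_adjugate_mul G i j i' j')
  have hA : φ.mapMatrix G = A := mvPolynomialX_map_eval₂ _ A
  rw [← hA, ← RingHom.map_adjugate, ← RingHom.map_det]
  simpa [RingHom.map_det, submatrix_map] using congrArg φ hG

end Matrix

end CommRing

/-- **Jacobi's Theorem, 2×2 case.**  For `n ≥ 2`, rows `p < q` and columns
`u < v` of an `n × n` matrix `A` over a commutative ring,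
`A'(p,u)·A'(q,v) − A'(p,v)·A'(q,u) = det A · det B · (−1)^{p+q+u+v}`,
where `A'(r,c)` is the `(r,c)` cofactor of `A` and `B` is the `(n-2) × (n-2)`
submatrix of `A` obtained by deleting rows `p, q` and columns `u, v`. -/
theorem jacobi_two_by_two_cofactors {R : Type*} [CommRing R] {n : ℕ} (hn : 2 ≤ n)
    (A : Matrix (Fin n) (Fin n) R) (p q u v : Fin n)
    (hpq : p.1 < q.1) (huv : u.1 < v.1) :
    cofactor A p u * cofactor A q v - cofactor A p v * cofactor A q u
      = A.det *
        (Matrix.of fun r c : Fin (n - 2) =>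
          A ⟨skip q.1 (skip p.1 r.1), by
                have := skip_le p.1 r.1; have := skip_le q.1 (skip p.1 r.1); omega⟩
            ⟨skip v.1 (skip u.1 c.1), by
                have := skip_le u.1 c.1; have := skip_le v.1 (skip u.1 c.1); omega⟩).det
        * (-1 : R) ^ (p.1 + q.1 + u.1 + v.1) := by
  obtain ⟨m, rfl⟩ : ∃ m, n = m + 2 := ⟨n - 2, by omega⟩
  let p' : Fin (m + 1) := ⟨p, by omega⟩
  let u' : Fin (m + 1) := ⟨u, by omega⟩
  have hp : q.succAbove p' = p := Fin.succAbove_of_castSucc_lt _ _ hpq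
  have hu : v.succAbove u' = u := Fin.succAbove_of_castSucc_lt _ _ huv
  calc _ = A.adjugate (v.succAbove u') (q.succAbove p') * A.adjugate v q
        - A.adjugate v (q.succAbove p') * A.adjugate (v.succAbove u') q := by
        simp only [hp, hu, cofactor_eq_adjugate]
    _ = _ := Matrix.adjugate_mul_sub_adjugate_mul A q v p' u'
    _ = _ := by
      rw [mul_right_comm, show (q + v + p' + u' : ℕ) = p + q + u + v by simp only [p', u']; ring]
      congr 3
      ext r c
      simp only [Matrix.submatrix_apply, Matrix.of_apply]
      congr 1 <;> ext <;> simp only [Fin.val_succAbove_eq_skip] <;> rfl
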